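/- arXiv:1210.2297 — 4 statements merged into one kernel-verified Lean document; each statement's English description precedes it below -/
import Mathlib

section
/- Let (→α)_{α∈I} be a family of relations indexed by a set I equipped with a well-founded strict order ≻. Suppose every local peak b ←α a →β c (α, β ∈ I) is decreasing, i.e. there exists d with b ↠_{≺α} ∘ →=_{⪯β} ∘ ↠_{≺{α,β}} d and c ↠_{≺β} ∘ →=_{⪯α} ∘ ↠_{≺{α,β}} d, where →_K denotes the union of →γ over γ ∈ K, ≺α = {γ | γ ≺ α} and ≺{α,β} = {γ | γ ≺ α or γ ≺ β}, and ⪯β = {γ | γ ≺ β or γ = β}. Then the union ⋃_{α∈I} →α is confluent. -/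
/-!
Following Jouannaud and van Oostrom, measure a labelled reduction `σ` by the multiset `lexmax σ`
of its labels that are not below an earlier label. One shows, by well-founded induction on
`lexmax σ + lexmax τ` in the Dershowitz–Manna order, that every peak `b ↞σ a ↠τ c` has a valley
`b ↠τ' d ↞σ' c` in which `τ'`, read after `σ`, weighs at most `lexmax τ`, and symmetrically.
To close a peak, close its first local peak by a decreasing diagram. This leaves three smaller
peaks: one on each side of that diagram and one below it. The invariant for the two side
peaks is what makes the peak below smaller, and it also gives the invariant for the whole valley.
Decreasingness is preserved when the order grows, so we may first extend `≺` to a well-order.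
-/

/-- The union of a family of relations, restricted to labels in a set `K`. -/
def LabelStep {I E : Type*} (r : I → E → E → Prop) (K : Set I) : E → E → Prop :=
  fun a b => ∃ γ ∈ K, r γ a b

namespace Multiset

variable {α : Type*} [Preorder α] {M N P X Y Z : Multiset α}

def IsDershowitzMannaLE (M N : Multiset α) : Prop :=
  ∃ X Y Z, M = X + Y ∧ N = X + Z ∧ ∀ y ∈ Y, ∃ z ∈ Z, y < z

theorem isDershowitzMannaLE_add_of_forall_exists_lt (h : ∀ y ∈ Y, ∃ z ∈ Z, y < z) :
    IsDershowitzMannaLE (X + Y) (X + Z) :=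
  ⟨X, Y, Z, rfl, rfl, h⟩

theorem isDershowitzMannaLT_add_of_forall_exists_lt (hZ : Z ≠ 0)
    (h : ∀ y ∈ Y, ∃ z ∈ Z, y < z) : IsDershowitzMannaLT (X + Y) (X + Z) :=
  ⟨X, Y, Z, hZ, rfl, rfl, h⟩

theorem isDershowitzMannaLE_iff :
    IsDershowitzMannaLE M N ↔ M = N ∨ IsDershowitzMannaLT M N := by
  constructor
  · rintro ⟨X, Y, Z, rfl, rfl, h⟩
    obtain rfl | hZ := eq_or_ne Z 0
    · obtain rfl : Y = 0 := eq_zero_of_forall_notMem fun y hy ↦ by simpa using h y hy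
      exact .inl rfl
    · exact .inr (isDershowitzMannaLT_add_of_forall_exists_lt hZ h)
  · rintro (rfl | ⟨X, Y, Z, -, rfl, rfl, h⟩)
    · simpa using isDershowitzMannaLE_add_of_forall_exists_lt (X := M) (Y := 0) (Z := 0) (by simp)
    · exact isDershowitzMannaLE_add_of_forall_exists_lt h

theorem IsDershowitzMannaLE.refl (M : Multiset α) : IsDershowitzMannaLE M M :=
  isDershowitzMannaLE_iff.2 (.inl rfl)

theorem IsDershowitzMannaLT.isDershowitzMannaLE (h : IsDershowitzMannaLT M N) :
    IsDershowitzMannaLE M N :=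
  isDershowitzMannaLE_iff.2 (.inr h)

theorem IsDershowitzMannaLE.trans_lt (h₁ : IsDershowitzMannaLE M N)
    (h₂ : IsDershowitzMannaLT N P) : IsDershowitzMannaLT M P := by
  obtain rfl | h₁ := isDershowitzMannaLE_iff.1 h₁
  exacts [h₂, h₁.trans h₂]

theorem IsDershowitzMannaLT.trans_le (h₁ : IsDershowitzMannaLT M N)
    (h₂ : IsDershowitzMannaLE N P) : IsDershowitzMannaLT M P := by
  obtain rfl | h₂ := isDershowitzMannaLE_iff.1 h₂
  exacts [h₁, h₁.trans h₂]

theorem IsDershowitzMannaLE.trans (h₁ : IsDershowitzMannaLE M N)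
    (h₂ : IsDershowitzMannaLE N P) : IsDershowitzMannaLE M P := by
  obtain rfl | h₂ := isDershowitzMannaLE_iff.1 h₂
  exacts [h₁, (h₁.trans_lt h₂).isDershowitzMannaLE]

theorem IsDershowitzMannaLE.add {M' N' : Multiset α} (h : IsDershowitzMannaLE M N)
    (h' : IsDershowitzMannaLE M' N') : IsDershowitzMannaLE (M + M') (N + N') := by
  obtain ⟨X, Y, Z, rfl, rfl, hYZ⟩ := h
  obtain ⟨X', Y', Z', rfl, rfl, hYZ'⟩ := h'
  refine ⟨X + X', Y + Y', Z + Z', by abel, by abel, fun y hy ↦ ?_⟩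
  rcases mem_add.1 hy with hy | hy
  · obtain ⟨z, hz, hyz⟩ := hYZ y hy
    exact ⟨z, mem_add.2 (.inl hz), hyz⟩
  · obtain ⟨z, hz, hyz⟩ := hYZ' y hy
    exact ⟨z, mem_add.2 (.inr hz), hyz⟩

theorem isDershowitzMannaLE_of_le (h : M ≤ N) : IsDershowitzMannaLE M N := by
  obtain ⟨Z, rfl⟩ := le_iff_exists_add.1 h
  simpa using isDershowitzMannaLE_add_of_forall_exists_lt (X := M) (Y := 0) (Z := Z) (by simp)

theorem IsDershowitzMannaLE.filter (p : α → Prop) [DecidablePred p]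
    (hp : IsUpperSet {a | p a}) (h : IsDershowitzMannaLE M N) :
    IsDershowitzMannaLE (M.filter p) (N.filter p) := by
  obtain ⟨X, Y, Z, rfl, rfl, hYZ⟩ := h
  simp only [filter_add]
  refine isDershowitzMannaLE_add_of_forall_exists_lt fun y hy ↦ ?_
  obtain ⟨hy, hpy⟩ := mem_filter.1 hy
  obtain ⟨z, hz, hyz⟩ := hYZ y hy
  exact ⟨z, mem_filter.2 ⟨hz, hp hyz.le hpy⟩, hyz⟩

theorem IsDershowitzMannaLE.exists_ge {a : α} (h : IsDershowitzMannaLE M N) (ha : a ∈ M) :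
    ∃ b ∈ N, a ≤ b := by
  obtain ⟨X, Y, Z, rfl, rfl, hYZ⟩ := h
  rcases mem_add.1 ha with ha | ha
  · exact ⟨a, mem_add.2 (.inl ha), le_rfl⟩
  · obtain ⟨z, hz, haz⟩ := hYZ a ha
    exact ⟨z, mem_add.2 (.inr hz), haz.le⟩

theorem isDershowitzMannaLE_singleton_iff {b : α} :
    IsDershowitzMannaLE M {b} ↔ M = {b} ∨ ∀ a ∈ M, a < b := by
  constructor
  · rintro ⟨X, Y, Z, rfl, hXZ, hYZ⟩
    obtain rfl | rfl := le_singleton.1 (hXZ ▸ le_add_right X Z : X ≤ {b})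
    · rw [zero_add] at hXZ ⊢
      exact .inr fun a ha ↦ by simpa [← hXZ] using hYZ a ha
    · obtain rfl : Z = 0 := by simpa using hXZ
      obtain rfl : Y = 0 := eq_zero_of_forall_notMem fun y hy ↦ by simpa using hYZ y hy
      exact .inl (add_zero _)
  · rintro (rfl | h)
    · exact .refl _
    · simpa using isDershowitzMannaLE_add_of_forall_exists_lt (X := 0) (Y := M) (Z := {b})
        fun a ha ↦ ⟨b, mem_singleton_self b, h a ha⟩

theorem isDershowitzMannaLE_singleton_add {A J : Multiset α} {b : α}
    (hA : IsDershowitzMannaLE A {b}) (hJ : ∀ j ∈ J, j < b) (hb : b ∈ A → J = 0) :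
    IsDershowitzMannaLE (A + J) {b} := by
  obtain rfl | hA := isDershowitzMannaLE_singleton_iff.1 hA
  · rw [hb (mem_singleton_self b), add_zero]
    exact .refl _
  · refine isDershowitzMannaLE_singleton_iff.2 (.inr fun a ha ↦ ?_)
    obtain ha | ha := mem_add.1 ha
    exacts [hA a ha, hJ a ha]

instance : @Trans (Multiset α) (Multiset α) (Multiset α)
    IsDershowitzMannaLE IsDershowitzMannaLE IsDershowitzMannaLE := ⟨IsDershowitzMannaLE.trans⟩

instance : @Trans (Multiset α) (Multiset α) (Multiset α)
    IsDershowitzMannaLE IsDershowitzMannaLT IsDershowitzMannaLT := ⟨IsDershowitzMannaLE.trans_lt⟩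

instance : @Trans (Multiset α) (Multiset α) (Multiset α)
    IsDershowitzMannaLT IsDershowitzMannaLE IsDershowitzMannaLT := ⟨IsDershowitzMannaLT.trans_le⟩

end Multiset

namespace DecreasingDiagrams

open Relation
open scoped Classical

local infix:50 " ≤ₘ " => Multiset.IsDershowitzMannaLE
local infix:50 " <ₘ " => Multiset.IsDershowitzMannaLT

variable {I : Type*}

section Paths

variable {E : Type*} {r : I → E → E → Prop}

inductive LabelPath (r : I → E → E → Prop) : List I → E → E → Prop
  | nil (a : E) : LabelPath r [] a a
  | cons {γ : I} {l : List I} {a b c : E} :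
      r γ a b → LabelPath r l b c → LabelPath r (γ :: l) a c

theorem LabelStep.mono {K K' : Set I} (h : K ⊆ K') : LabelStep r K ≤ LabelStep r K' :=
  fun _ _ ⟨γ, hγ, hab⟩ ↦ ⟨γ, h hγ, hab⟩

theorem LabelPath.append {l₁ l₂ : List I} {a b c : E} (h₁ : LabelPath r l₁ a b)
    (h₂ : LabelPath r l₂ b c) : LabelPath r (l₁ ++ l₂) a c := by
  induction h₁ with
  | nil => exact h₂
  | cons hab _ ih => exact .cons hab (ih h₂)

theorem LabelPath.reflTransGen {l : List I} {a b : E} (h : LabelPath r l a b) :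
    ReflTransGen (LabelStep r Set.univ) a b := by
  induction h with
  | nil => exact .refl
  | cons hab _ ih => exact .head ⟨_, Set.mem_univ _, hab⟩ ih

theorem exists_labelPath_of_reflTransGen {K : Set I} {a b : E}
    (h : ReflTransGen (LabelStep r K) a b) : ∃ l, LabelPath r l a b ∧ ∀ γ ∈ l, γ ∈ K := by
  induction h using ReflTransGen.head_induction_on with
  | refl => exact ⟨[], .nil b, by simp⟩
  | head hac _ ih =>
    obtain ⟨γ, hγ, hac⟩ := hac
    obtain ⟨l, hl, hlK⟩ := ih
    exact ⟨γ :: l, .cons hac hl, by simpa [hγ] using hlK⟩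

theorem exists_labelPath_of_reflGen {K : Set I} {a b : E} (h : ReflGen (LabelStep r K) a b) :
    ∃ l, LabelPath r l a b ∧ l.length ≤ 1 ∧ ∀ γ ∈ l, γ ∈ K := by
  obtain _ | ⟨γ, hγ, hab⟩ := h
  · exact ⟨[], .nil a, by simp⟩
  · exact ⟨[γ], .cons hab (.nil b), by simp, by simpa using hγ⟩

end Paths

section Lexmax

variable [Preorder I]

def strictlyBelow (L : List I) : Set I := {y | ∃ x ∈ L, y < x}

@[simp] theorem mem_strictlyBelow {L : List I} {y : I} :
    y ∈ strictlyBelow L ↔ ∃ x ∈ L, y < x := Iff.rfl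

theorem isLowerSet_strictlyBelow (L : List I) : IsLowerSet (strictlyBelow L) :=
  fun _ _ hyz ⟨x, hx, hzx⟩ ↦ ⟨x, hx, hyz.trans_lt hzx⟩

noncomputable def lexmax : List I → Multiset I
  | [] => 0
  | x :: l => x ::ₘ (lexmax l).filter (· ∉ Set.Iio x)

@[simp] theorem lexmax_nil : lexmax ([] : List I) = 0 := rfl

theorem lexmax_cons (x : I) (l : List I) :
    lexmax (x :: l) = x ::ₘ (lexmax l).filter (· ∉ Set.Iio x) := rfl

theorem lexmax_le (l : List I) : lexmax l ≤ l := by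
  induction l with
  | nil => simp
  | cons x l ih =>
    rw [lexmax_cons, ← Multiset.cons_coe]
    exact Multiset.cons_le_cons x ((Multiset.filter_le _ _).trans ih)

theorem mem_of_mem_lexmax {l : List I} {x : I} (h : x ∈ lexmax l) : x ∈ l :=
  Multiset.mem_coe.1 (Multiset.mem_of_le (lexmax_le l) h)

theorem exists_mem_lexmax_ge {l : List I} {x : I} (h : x ∈ l) : ∃ y ∈ lexmax l, x ≤ y := by
  induction l with
  | nil => simp at h
  | cons z l ih =>
    rw [lexmax_cons]
    obtain rfl | h := List.mem_cons.1 h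
    · exact ⟨x, Multiset.mem_cons_self _ _, le_rfl⟩
    obtain ⟨y, hy, hxy⟩ := ih h
    by_cases hyz : y < z
    · exact ⟨z, Multiset.mem_cons_self _ _, hxy.trans hyz.le⟩
    · exact ⟨y, Multiset.mem_cons_of_mem (Multiset.mem_filter.2 ⟨hy, hyz⟩), hxy⟩

theorem lexmax_filter (p : I → Prop) [DecidablePred p] (hp : IsUpperSet {a | p a})
    (l : List I) : lexmax (l.filter p) = (lexmax l).filter p := by
  induction l with
  | nil => simp
  | cons x l ih =>
    rw [lexmax_cons]
    by_cases hx : p x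
    · rw [List.filter_cons_of_pos (by simpa using hx), lexmax_cons,
        Multiset.filter_cons_of_pos _ hx, ih, Multiset.filter_filter, Multiset.filter_filter]
      simp only [and_comm]
    · rw [List.filter_cons_of_neg (by simpa using hx), Multiset.filter_cons_of_neg _ hx, ih,
        Multiset.filter_filter]
      exact Multiset.filter_congr fun y _ ↦ ⟨fun hy ↦ ⟨hy, fun h ↦ hx (hp h.le hy)⟩, And.left⟩

theorem lexmax_eq_lexmax_filter_add {t : Set I} (ht : IsLowerSet t) (l : List I) :
    lexmax l = lexmax (l.filter (· ∉ t)) + (lexmax l).filter (· ∈ t) := by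
  rw [lexmax_filter _ ht.compl, add_comm, Multiset.filter_add_not]

theorem lexmax_append (l₁ l₂ : List I) :
    lexmax (l₁ ++ l₂) = lexmax l₁ + lexmax (l₂.filter (· ∉ strictlyBelow l₁)) := by
  induction l₁ with
  | nil => simp
  | cons x l₁ ih =>
    rw [List.cons_append, lexmax_cons, lexmax_cons, ih, Multiset.filter_add, Multiset.cons_add]
    congr 2
    rw [← lexmax_filter _ (isLowerSet_Iio x).compl, List.filter_filter]
    congr 1
    refine List.filter_congr fun y _ ↦ ?_
    simp

theorem isDershowitzMannaLE_lexmax_add {l L : List I} {M : Multiset I}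
    (h : lexmax (l.filter (· ∉ strictlyBelow L)) ≤ₘ M) :
    lexmax l ≤ₘ M + (lexmax l).filter (· ∈ strictlyBelow L) := by
  nth_rw 1 [lexmax_eq_lexmax_filter_add (isLowerSet_strictlyBelow L) l]
  exact h.add (.refl _)

theorem strictlyBelow_subset_union {l σ L : List I} {T : Set I} (hT : IsLowerSet T)
    (hL : strictlyBelow L ⊆ T)
    (h : lexmax (l.filter (· ∉ strictlyBelow L)) ≤ₘ lexmax σ) :
    strictlyBelow l ⊆ T ∪ strictlyBelow σ := by
  rintro x ⟨y, hy, hxy⟩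
  obtain ⟨z, hz, hyz⟩ := exists_mem_lexmax_ge hy
  obtain ⟨w, hw, hzw⟩ := (isDershowitzMannaLE_lexmax_add h).exists_ge hz
  obtain hw | hw := Multiset.mem_add.1 hw
  · exact .inr ⟨w, mem_of_mem_lexmax hw, hxy.trans_le (hyz.trans hzw)⟩
  · exact .inl (hT (hxy.le.trans (hyz.trans hzw)) (hL (Multiset.mem_filter.1 hw).2))

theorem strictlyBelow_subset_of_isDershowitzMannaLE {α β : I} {ρ : List I}
    (h : (lexmax ρ).filter (· ∉ Set.Iio α) ≤ₘ {β}) :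
    strictlyBelow ρ ⊆ Set.Iio α ∪ Set.Iio β := by
  rintro x ⟨y, hy, hxy⟩
  obtain ⟨z, hz, hyz⟩ := exists_mem_lexmax_ge hy
  by_cases hzα : z < α
  · exact .inl ((hxy.trans_le hyz).trans hzα)
  · obtain ⟨_, hβ, hzβ⟩ := h.exists_ge (Multiset.mem_filter.2 ⟨hz, hzα⟩)
    rw [Multiset.mem_singleton] at hβ
    exact .inr (hβ ▸ hxy.trans_le (hyz.trans hzβ))

theorem lexmax_add_lexmax_lt_of_side {α β : I} {σ τ ρ : List I}
    (hρ : (lexmax ρ).filter (· ∉ Set.Iio α) ≤ₘ {β}) :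
    lexmax σ + lexmax ρ <ₘ lexmax (α :: σ) + lexmax (β :: τ) := by
  set A := (lexmax σ).filter (· ∉ Set.Iio α)
  calc lexmax σ + lexmax ρ
      = (A + (lexmax ρ).filter (· ∉ Set.Iio α)) +
          ((lexmax σ).filter (· ∈ Set.Iio α) + (lexmax ρ).filter (· ∈ Set.Iio α)) := by
        conv_lhs => rw [← Multiset.filter_add_not (· ∈ Set.Iio α) (lexmax σ),
          ← Multiset.filter_add_not (· ∈ Set.Iio α) (lexmax ρ)]
        abel
    _ ≤ₘ (A + {β}) + ((lexmax σ).filter (· ∈ Set.Iio α) + (lexmax ρ).filter (· ∈ Set.Iio α)) :=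
        ((Multiset.IsDershowitzMannaLE.refl A).add hρ).add (.refl _)
    _ <ₘ (A + {β}) + {α} := by
        refine Multiset.isDershowitzMannaLT_add_of_forall_exists_lt (by simp) fun y hy ↦ ?_
        simp only [Multiset.mem_add, Multiset.mem_filter] at hy
        exact ⟨α, Multiset.mem_singleton_self α, by rcases hy with ⟨-, h⟩ | ⟨-, h⟩ <;> exact h⟩
    _ ≤ₘ lexmax (α :: σ) + lexmax (β :: τ) := by
        refine Multiset.isDershowitzMannaLE_of_le ?_
        rw [lexmax_cons, lexmax_cons, add_right_comm, add_comm A, Multiset.singleton_add]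
        exact add_le_add_right (Multiset.singleton_le.2 (Multiset.mem_cons_self _ _)) _

theorem lexmax_add_lexmax_lt_of_valleys {α β : I} {σ τ ρ₁ ρ₂ Q S : List I}
    (hρ₁ : strictlyBelow ρ₁ ⊆ Set.Iio α ∪ Set.Iio β)
    (hρ₂ : strictlyBelow ρ₂ ⊆ Set.Iio β ∪ Set.Iio α)
    (hQ : lexmax (Q.filter (· ∉ strictlyBelow ρ₁)) ≤ₘ lexmax σ)
    (hS : lexmax (S.filter (· ∉ strictlyBelow ρ₂)) ≤ₘ lexmax τ) :
    lexmax Q + lexmax S <ₘ lexmax (α :: σ) + lexmax (β :: τ) := by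
  set J := (lexmax σ).filter (· ∈ Set.Iio α) + (lexmax τ).filter (· ∈ Set.Iio β) +
    (lexmax Q).filter (· ∈ strictlyBelow ρ₁) + (lexmax S).filter (· ∈ strictlyBelow ρ₂) with hJ_def
  have hJ : ∀ j ∈ J, j < α ∨ j < β := by
    simp only [J, Multiset.mem_add, Multiset.mem_filter]
    rintro j (((⟨-, h⟩ | ⟨-, h⟩) | ⟨-, h⟩) | ⟨-, h⟩)
    exacts [.inl h, .inr h, hρ₁ h, (hρ₂ h).symm]
  calc lexmax Q + lexmax S
      ≤ₘ (lexmax σ + (lexmax Q).filter (· ∈ strictlyBelow ρ₁)) +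
          (lexmax τ + (lexmax S).filter (· ∈ strictlyBelow ρ₂)) :=
        (isDershowitzMannaLE_lexmax_add hQ).add (isDershowitzMannaLE_lexmax_add hS)
    _ = ((lexmax σ).filter (· ∉ Set.Iio α) + (lexmax τ).filter (· ∉ Set.Iio β)) + J := by
        conv_lhs => rw [← Multiset.filter_add_not (· ∈ Set.Iio α) (lexmax σ),
          ← Multiset.filter_add_not (· ∈ Set.Iio β) (lexmax τ)]
        rw [hJ_def]
        abel
    _ <ₘ ((lexmax σ).filter (· ∉ Set.Iio α) + (lexmax τ).filter (· ∉ Set.Iio β)) + {α, β} := by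
        refine Multiset.isDershowitzMannaLT_add_of_forall_exists_lt (by simp) fun j hj ↦ ?_
        obtain h | h := hJ j hj
        exacts [⟨α, by simp, h⟩, ⟨β, by simp, h⟩]
    _ = lexmax (α :: σ) + lexmax (β :: τ) := by
        rw [lexmax_cons, lexmax_cons, Multiset.insert_eq_cons, ← Multiset.singleton_add,
          ← Multiset.singleton_add, ← Multiset.singleton_add]
        abel

theorem filter_lexmax_le_singleton {α β : I} {σ ρ P : List I}
    (hρ : (lexmax ρ).filter (· ∉ Set.Iio α) ≤ₘ {β})
    (hP : lexmax (P.filter (· ∉ strictlyBelow σ)) ≤ₘ lexmax ρ) :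
    (lexmax P).filter (· ∉ strictlyBelow (α :: σ)) ≤ₘ {β} := by
  refine .trans ?_ ((hP.filter _ (isLowerSet_Iio α).compl).trans hρ)
  rw [← lexmax_filter _ (isLowerSet_strictlyBelow _).compl,
    ← lexmax_filter _ (isLowerSet_Iio α).compl, List.filter_filter]
  convert Multiset.IsDershowitzMannaLE.refl _ using 3
  ext x
  simp

theorem exists_lexmax_le_add {α β : I} {σ τ ρ₁ ρ₂ Q S F : List I}
    (hρ₁ : strictlyBelow ρ₁ ⊆ Set.Iio α ∪ Set.Iio β)
    (hρ₂ : strictlyBelow ρ₂ ⊆ Set.Iio β ∪ Set.Iio α)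
    (hQ : lexmax (Q.filter (· ∉ strictlyBelow ρ₁)) ≤ₘ lexmax σ)
    (hS : lexmax (S.filter (· ∉ strictlyBelow ρ₂)) ≤ₘ lexmax τ)
    (hF : lexmax (F.filter (· ∉ strictlyBelow Q)) ≤ₘ lexmax S) :
    ∃ J : Multiset I, (∀ j ∈ J, j < α ∨ j < β ∨ j ∈ strictlyBelow σ) ∧
      lexmax F ≤ₘ (lexmax τ).filter (· ∉ Set.Iio β) + J := by
  have hQσ := strictlyBelow_subset_union ((isLowerSet_Iio α).union (isLowerSet_Iio β)) hρ₁ hQ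
  refine ⟨(lexmax τ).filter (· ∈ Set.Iio β) + (lexmax S).filter (· ∈ strictlyBelow ρ₂) +
    (lexmax F).filter (· ∈ strictlyBelow Q), ?_, ?_⟩
  · simp only [Multiset.mem_add, Multiset.mem_filter]
    rintro j ((⟨-, h⟩ | ⟨-, h⟩) | ⟨-, h⟩)
    · exact .inr (.inl h)
    · exact (hρ₂ h).elim (.inr ∘ .inl) .inl
    · exact (hQσ h).elim (·.elim .inl (.inr ∘ .inl)) (.inr ∘ .inr)
  calc lexmax F
      ≤ₘ lexmax S + (lexmax F).filter (· ∈ strictlyBelow Q) := isDershowitzMannaLE_lexmax_add hF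
    _ ≤ₘ (lexmax τ + (lexmax S).filter (· ∈ strictlyBelow ρ₂)) +
          (lexmax F).filter (· ∈ strictlyBelow Q) :=
        (isDershowitzMannaLE_lexmax_add hS).add (.refl _)
    _ = _ := by
        conv_lhs => rw [← Multiset.filter_add_not (· ∈ Set.Iio β) (lexmax τ)]
        abel

theorem lexmax_filter_append_le {α β : I} {σ τ ρ₁ ρ₂ P Q S F : List I}
    (hρ₁ : (lexmax ρ₁).filter (· ∉ Set.Iio α) ≤ₘ {β})
    (hρ₂ : strictlyBelow ρ₂ ⊆ Set.Iio β ∪ Set.Iio α)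
    (hP : lexmax (P.filter (· ∉ strictlyBelow σ)) ≤ₘ lexmax ρ₁)
    (hQ : lexmax (Q.filter (· ∉ strictlyBelow ρ₁)) ≤ₘ lexmax σ)
    (hS : lexmax (S.filter (· ∉ strictlyBelow ρ₂)) ≤ₘ lexmax τ)
    (hF : lexmax (F.filter (· ∉ strictlyBelow Q)) ≤ₘ lexmax S) :
    lexmax ((P ++ F).filter (· ∉ strictlyBelow (α :: σ))) ≤ₘ lexmax (β :: τ) := by
  obtain ⟨J, hJ, hFJ⟩ :=
    exists_lexmax_le_add (strictlyBelow_subset_of_isDershowitzMannaLE hρ₁) hρ₂ hQ hS hF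
  have hA := filter_lexmax_le_singleton hρ₁ hP
  set k : I → Prop := (· ∉ strictlyBelow (α :: σ))
  set B := (lexmax τ).filter (· ∉ Set.Iio β)
  set J' := (J.filter (· ∉ strictlyBelow P)).filter k
  have hJ' : ∀ j ∈ J', j < β := by
    intro j hj
    obtain ⟨⟨hjJ, -⟩, hjk⟩ := Multiset.mem_filter.1 hj |>.imp_left Multiset.mem_filter.1
    rcases hJ j hjJ with h | h | ⟨x, hx, hjx⟩
    · exact absurd ⟨α, List.mem_cons_self, h⟩ hjk
    · exact h
    · exact absurd ⟨x, List.mem_cons_of_mem _ hx, hjx⟩ hjk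
  -- a surviving `β` in `P` hides all of `J'`; otherwise `(lexmax P).filter k` lies below `β`
  have hβ : β ∈ (lexmax P).filter k → J' = 0 := fun hβ ↦
    Multiset.eq_zero_of_forall_notMem fun j hj ↦
      (Multiset.mem_filter.1 (Multiset.mem_filter.1 hj).1).2
        ⟨β, mem_of_mem_lexmax (Multiset.mem_filter.1 hβ).1, hJ' j hj⟩
  rw [lexmax_filter k (isLowerSet_strictlyBelow _).compl, lexmax_append,
    Multiset.filter_add, lexmax_filter _ (isLowerSet_strictlyBelow _).compl]
  calc (lexmax P).filter k + ((lexmax F).filter (· ∉ strictlyBelow P)).filter k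
      ≤ₘ (lexmax P).filter k + ((B + J).filter (· ∉ strictlyBelow P)).filter k :=
        (Multiset.IsDershowitzMannaLE.refl _).add
          ((hFJ.filter _ (isLowerSet_strictlyBelow P).compl).filter _
            (isLowerSet_strictlyBelow _).compl)
    _ = ((lexmax P).filter k + J') + (B.filter (· ∉ strictlyBelow P)).filter k := by
        rw [Multiset.filter_add, Multiset.filter_add]
        abel
    _ ≤ₘ {β} + B :=
        (Multiset.isDershowitzMannaLE_singleton_add hA hJ' hβ).add
          (Multiset.isDershowitzMannaLE_of_le
            ((Multiset.filter_le _ _).trans (Multiset.filter_le _ _)))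
    _ = lexmax (β :: τ) := by rw [lexmax_cons, Multiset.singleton_add]

end Lexmax

section Diagrams

variable [PartialOrder I] {E : Type*} {r : I → E → E → Prop}

def DecreasingPath (r : I → E → E → Prop) (α β : I) (b d : E) : Prop :=
  ∃ b₁ b₂, ReflTransGen (LabelStep r (Set.Iio α)) b b₁ ∧
    ReflGen (LabelStep r (Set.Iic β)) b₁ b₂ ∧
    ReflTransGen (LabelStep r (Set.Iio α ∪ Set.Iio β)) b₂ d

def LocallyDecreasing (r : I → E → E → Prop) : Prop :=
  ∀ α β a b c, r α a b → r β a c → ∃ d, DecreasingPath r α β b d ∧ DecreasingPath r β α c d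

theorem isDershowitzMannaLE_lexmax_filter_singleton {α β : I} {u m v : List I}
    (hu : ∀ γ ∈ u, γ < α) (hm : m.length ≤ 1) (hmβ : ∀ γ ∈ m, γ ≤ β)
    (hv : ∀ γ ∈ v, γ < α ∨ γ < β) :
    (lexmax (u ++ m ++ v)).filter (· ∉ Set.Iio α) ≤ₘ {β} := by
  rw [← lexmax_filter _ (isLowerSet_Iio α).compl, List.filter_append,
    List.filter_append, List.filter_eq_nil_iff.2 (by simpa using hu), List.nil_append,
    Multiset.isDershowitzMannaLE_singleton_iff]
  have hv' : ∀ γ ∈ v.filter (· ∉ Set.Iio α), γ < β := by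
    simpa using fun γ hγ hγα ↦ (hv γ hγ).resolve_left hγα
  -- only the step from `m` can reach `β`, and then it hides all of `v`
  by_cases hβ : m.filter (· ∉ Set.Iio α) = [β]
  · refine .inl ?_
    rw [hβ, List.singleton_append, lexmax_cons, Multiset.filter_eq_nil.2]
    · rfl
    · exact fun γ hγ hγβ ↦ hγβ (hv' γ (mem_of_mem_lexmax hγ))
  · refine .inr fun γ hγ ↦ ?_
    obtain hγ | hγ := List.mem_append.1 (mem_of_mem_lexmax hγ)
    · refine (hmβ γ (List.mem_of_mem_filter hγ)).lt_of_ne fun hγβ ↦ hβ ?_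
      subst hγβ
      obtain _ | ⟨δ, _ | ⟨_, _⟩⟩ := m
      · simp at hγ
      · obtain ⟨rfl, hγα⟩ : γ = δ ∧ γ ∉ Set.Iio α := by simpa using hγ
        simpa using hγα
      · simp at hm
    · exact hv' γ hγ

theorem DecreasingPath.of_subset {α β : I} {b d : E} {K₁ K₂ K₃ : Set I}
    (h₁ : K₁ ⊆ Set.Iio α) (h₂ : K₂ ⊆ Set.Iic β) (h₃ : K₃ ⊆ Set.Iio α ∪ Set.Iio β)
    (h : ∃ b₁ b₂, ReflTransGen (LabelStep r K₁) b b₁ ∧ ReflGen (LabelStep r K₂) b₁ b₂ ∧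
      ReflTransGen (LabelStep r K₃) b₂ d) :
    DecreasingPath r α β b d :=
  let ⟨b₁, b₂, hb₁, hb₂, hd⟩ := h
  ⟨b₁, b₂, ReflTransGen.mono (LabelStep.mono h₁) _ _ hb₁, ReflGen.mono (LabelStep.mono h₂) _ _ hb₂,
    ReflTransGen.mono (LabelStep.mono h₃) _ _ hd⟩

theorem DecreasingPath.exists_labelPath {α β : I} {b d : E} (h : DecreasingPath r α β b d) :
    ∃ ρ, LabelPath r ρ b d ∧ (lexmax ρ).filter (· ∉ Set.Iio α) ≤ₘ {β} := by
  obtain ⟨b₁, b₂, h₁, h₂, h₃⟩ := h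
  obtain ⟨u, hu, huα⟩ := exists_labelPath_of_reflTransGen h₁
  obtain ⟨m, hm, hm₁, hmβ⟩ := exists_labelPath_of_reflGen h₂
  obtain ⟨v, hv, hvαβ⟩ := exists_labelPath_of_reflTransGen h₃
  exact ⟨u ++ m ++ v, (hu.append hm).append hv,
    isDershowitzMannaLE_lexmax_filter_singleton huα hm₁ hmβ hvαβ⟩

theorem LocallyDecreasing.exists_valley [WellFoundedLT I] (hr : LocallyDecreasing r)
    {σ τ : List I} {a b c : E} (hσ : LabelPath r σ a b) (hτ : LabelPath r τ a c) :
    ∃ d τ' σ', LabelPath r τ' b d ∧ LabelPath r σ' c d ∧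
      lexmax (τ'.filter (· ∉ strictlyBelow σ)) ≤ₘ lexmax τ ∧
      lexmax (σ'.filter (· ∉ strictlyBelow τ)) ≤ₘ lexmax σ := by
  generalize hM : lexmax σ + lexmax τ = M
  induction M using (Multiset.wellFounded_isDershowitzMannaLT (α := I)).induction
    generalizing σ τ a b c with
  | h M ih =>
  subst hM
  cases hσ with
  | nil => exact ⟨c, τ, [], hτ, .nil c, by simpa using .refl _, .refl _⟩
  | @cons α σ₀ _ b₁ _ hab₁ hσ₀ =>
  cases hτ with
  | nil => exact ⟨b, [], α :: σ₀, .nil b, .cons hab₁ hσ₀, .refl _, by simpa using .refl _⟩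
  | @cons β τ₀ _ c₁ _ hac₁ hτ₀ =>
  obtain ⟨d₀, hb₁d₀, hc₁d₀⟩ := hr α β a b₁ c₁ hab₁ hac₁
  obtain ⟨ρ₁, hρ₁, hρ₁M⟩ := hb₁d₀.exists_labelPath
  obtain ⟨ρ₂, hρ₂, hρ₂M⟩ := hc₁d₀.exists_labelPath
  -- the peaks `σ₀, ρ₁` and `τ₀, ρ₂` beside the local diagram, then `Q, S` below it
  obtain ⟨y, P, Q, hP, hQ, hPM, hQM⟩ :=
    ih _ (lexmax_add_lexmax_lt_of_side hρ₁M) hσ₀ hρ₁ rfl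
  obtain ⟨w, R, S, hR, hS, hRM, hSM⟩ :=
    ih _ (add_comm (lexmax (β :: τ₀)) _ ▸ lexmax_add_lexmax_lt_of_side hρ₂M) hτ₀ hρ₂ rfl
  have hρ₁sub := strictlyBelow_subset_of_isDershowitzMannaLE hρ₁M
  have hρ₂sub := strictlyBelow_subset_of_isDershowitzMannaLE hρ₂M
  obtain ⟨f, F, G, hF, hG, hFM, hGM⟩ :=
    ih _ (lexmax_add_lexmax_lt_of_valleys hρ₁sub hρ₂sub hQM hSM) hQ hS rfl
  exact ⟨f, P ++ F, R ++ G, hP.append hF, hR.append hG,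
    lexmax_filter_append_le hρ₁M hρ₂sub hPM hQM hSM hFM,
    lexmax_filter_append_le hρ₂M hρ₁sub hRM hSM hQM hGM⟩

end Diagrams

end DecreasingDiagrams

open DecreasingDiagrams in
/-- Van Oostrom's decreasing-diagrams theorem: if every local peak of a
family of relations indexed by a well-founded strict order is decreasing,
then the union of the family is confluent. -/
theorem decreasing_diagrams {I E : Type*} (r : I → E → E → Prop)
    (lt : I → I → Prop)
    (hwf : WellFounded fun α β => lt α β)  -- lt α β : α ≺ β; well-founded
    (hdec : ∀ (α β : I) (a b c : E), r α a b → r β a c →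
      ∃ b₁ b₂ d, Relation.ReflTransGen (LabelStep r {γ | lt γ α}) b b₁ ∧
        Relation.ReflGen (LabelStep r {γ | lt γ β ∨ γ = β}) b₁ b₂ ∧
        Relation.ReflTransGen (LabelStep r {γ | lt γ α ∨ lt γ β}) b₂ d ∧
      ∃ c₁ c₂, Relation.ReflTransGen (LabelStep r {γ | lt γ β}) c c₁ ∧
        Relation.ReflGen (LabelStep r {γ | lt γ α ∨ γ = α}) c₁ c₂ ∧
        Relation.ReflTransGen (LabelStep r {γ | lt γ α ∨ lt γ β}) c₂ d) :
    ∀ a b c, Relation.ReflTransGen (LabelStep r Set.univ) a b →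
      Relation.ReflTransGen (LabelStep r Set.univ) a c →
      ∃ d, Relation.ReflTransGen (LabelStep r Set.univ) b d ∧
        Relation.ReflTransGen (LabelStep r Set.univ) c d := by
  have : IsWellFounded I lt := ⟨hwf⟩
  let : LinearOrder I := IsWellFounded.wellOrderExtension lt
  have hlt {α β : I} (h : lt α β) : α < β := Prod.Lex.left _ _ (IsWellFounded.rank_lt_of_rel h)
  have hle {α β : I} (h : lt α β ∨ α = β) : α ≤ β := h.elim (hlt · |>.le) (·.le)
  have hr : LocallyDecreasing r := fun α β a b c hab hac ↦ by
    obtain ⟨b₁, b₂, d, h₁, h₂, h₃, c₁, c₂, h₄, h₅, h₆⟩ := hdec α β a b c hab hac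
    exact ⟨d, .of_subset (fun _ ↦ hlt) (fun _ ↦ hle) (fun _ ↦ .imp hlt hlt) ⟨b₁, b₂, h₁, h₂, h₃⟩,
      .of_subset (fun _ ↦ hlt) (fun _ ↦ hle) (fun _ h ↦ (h.imp hlt hlt).symm) ⟨c₁, c₂, h₄, h₅, h₆⟩⟩
  intro a b c hab hac
  obtain ⟨σ, hσ, -⟩ := exists_labelPath_of_reflTransGen hab
  obtain ⟨τ, hτ, -⟩ := exists_labelPath_of_reflTransGen hac
  obtain ⟨d, τ', σ', hτ', hσ', -⟩ := hr.exists_valley hσ hτ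
  exact ⟨d, hτ'.reflTransGen, hσ'.reflTransGen⟩
end

section
/- Critical-pair lifting for multiset rewriting: if M → N₁ via rule (l₁,r₁) and M → N₂ via rule (l₂,r₂), then either the two rule applications are disjoint, i.e. there is a multiset K with M = l₁ + l₂ + K, N₁ = r₁ + l₂ + K, N₂ = l₁ + r₂ + K, so that N₁ → (r₁ + r₂ + K) ← N₂; or the redexes overlap: there exist nonempty multiset O ≤ l₁, O ≤ l₂ and K with M = l₁ + (l₂ - O) + K, and the peak is an instance (by adding K) of the peak from the critical ancestor l₁ + (l₂ - O). -/
/-- Critical-pair lifting for multiset rewriting: two rule applications on a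
common state either apply to disjoint parts (and then commute), or overlap in
a nonempty multiset `O`, in which case the peak is an instance (by adding a
context `K`) of the critical peak at the critical ancestor `l₁ + (l₂ - O)`. -/
theorem multiset_critical_pair_lifting {A : Type*} [DecidableEq A]
    (l₁ r₁ l₂ r₂ M N₁ N₂ K₁ K₂ : Multiset A)
    (h₁M : M = l₁ + K₁) (h₁N : N₁ = r₁ + K₁)
    (h₂M : M = l₂ + K₂) (h₂N : N₂ = r₂ + K₂) :
    (∃ K, M = l₁ + l₂ + K ∧ N₁ = r₁ + l₂ + K ∧ N₂ = l₁ + r₂ + K) ∨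
    (∃ O K, O ≠ 0 ∧ O ≤ l₁ ∧ O ≤ l₂ ∧
      M = (l₁ + (l₂ - O)) + K ∧
      N₁ = (r₁ + (l₂ - O)) + K ∧
      N₂ = ((l₁ - O) + r₂) + K) := by
  have hMM : ∀ a, Multiset.count a l₁ + Multiset.count a K₁
      = Multiset.count a l₂ + Multiset.count a K₂ := by
    intro a
    have := congrArg (Multiset.count a) (h₁M.symm.trans h₂M)
    simpa [Multiset.count_add] using this
  by_cases h : l₂ ≤ K₁
  · left
    refine ⟨K₁ - l₂, ?_, ?_, ?_⟩ <;>
      · subst h₁M h₁N h₂N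
        ext a
        have hc := Multiset.count_le_of_le a h
        have := hMM a
        simp only [Multiset.count_add, Multiset.count_sub]
        omega
  · right
    refine ⟨l₂ - K₁, K₁ - l₂, ?_, ?_, ?_, ?_, ?_, ?_⟩
    · intro h0
      exact h (Multiset.sub_le_iff_le_add.mp h0.le |>.trans (by simp))
    · rw [Multiset.le_iff_count]
      intro a
      have := hMM a
      simp only [Multiset.count_sub]
      omega
    · exact Multiset.sub_le_self _ _
    all_goals
      subst h₁M h₁N h₂N
      ext a
      have := hMM a
      simp only [Multiset.count_add, Multiset.count_sub]
      omega
end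

section
/- Critical-pair criterion for confluence of multiset rewriting: let R be a set of multiset rules such that the rewrite relation → is terminating, and such that for every pair of rules (l₁,r₁), (l₂,r₂) and every nonempty multiset O with O ≤ l₁ and O ≤ l₂, the critical peak r₁ + (l₂ - O) ↞ l₁ + (l₂ - O) ↠ (l₁ - O) + r₂ is joinable (both sides reduce by ↠ to a common multiset). Then → is confluent. -/
/-!
By Newman's lemma, a terminating relation is confluent as soon as it is locally confluent.
For a peak `r₁ + K₁ ← l₁ + K₁ = l₂ + K₂ → r₂ + K₂` put `O = l₁ ∩ l₂` and `C = K₁ ∩ K₂`; then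
`K₁ = (l₂ - O) + C` and `K₂ = (l₁ - O) + C`, so the peak is the critical peak at the overlap `O`
with the context `C` added. If `O = 0` it closes in one step on each side, otherwise by hypothesis,
and since rewriting is monotone under adding a context, the joining reductions lift.
-/

/-- One-step multiset rewriting generated by a set of rules `R`. -/
def MRStep {A : Type*} (R : Set (Multiset A × Multiset A)) :
    Multiset A → Multiset A → Prop :=
  fun M N => ∃ lr ∈ R, ∃ K, M = lr.1 + K ∧ N = lr.2 + K

namespace Relation

variable {α : Type*} {r : α → α → Prop}

theorem newman (hwf : WellFounded (flip r))
    (hlc : ∀ a b c, r a b → r a c → Join (ReflTransGen r) b c) {a b c : α}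
    (hab : ReflTransGen r a b) (hac : ReflTransGen r a c) : Join (ReflTransGen r) b c := by
  induction a using hwf.induction generalizing b c with
  | _ a ih =>
    rcases hab.cases_head with rfl | ⟨b', hab', hb'b⟩
    · exact ⟨c, hac, .refl⟩
    rcases hac.cases_head with rfl | ⟨c', hac', hc'c⟩
    · exact ⟨b, .refl, hab⟩
    obtain ⟨d, hb'd, hc'd⟩ := hlc a b' c' hab' hac'
    obtain ⟨e, hbe, hde⟩ := ih b' hab' hb'b hb'd
    obtain ⟨f, hef, hcf⟩ := ih c' hac' (hc'd.trans hde) hc'c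
    exact ⟨f, hbe.trans hef, hcf⟩

end Relation

open Relation Multiset

section MRStep

variable {A : Type*} {R : Set (Multiset A × Multiset A)}

theorem MRStep.add_right {M N : Multiset A} (h : MRStep R M N) (C : Multiset A) :
    MRStep R (M + C) (N + C) := by
  obtain ⟨lr, hlr, K, rfl, rfl⟩ := h
  exact ⟨lr, hlr, K + C, add_assoc .., add_assoc ..⟩

theorem MRStep.reflTransGen_add_right {M N : Multiset A}
    (h : ReflTransGen (MRStep R) M N) (C : Multiset A) :
    ReflTransGen (MRStep R) (M + C) (N + C) :=
  ReflTransGen.lift (· + C) (fun _ _ hstep ↦ hstep.add_right C) _ _ h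

def CriticalPeaksJoinable [DecidableEq A] (R : Set (Multiset A × Multiset A)) : Prop :=
  ∀ l₁ r₁ l₂ r₂, (l₁, r₁) ∈ R → (l₂, r₂) ∈ R →
    ∀ O : Multiset A, O ≠ 0 → O ≤ l₁ → O ≤ l₂ →
    Join (ReflTransGen (MRStep R)) (r₁ + (l₂ - O)) ((l₁ - O) + r₂)

variable [DecidableEq A]

theorem MRStep.join_peak (hcp : CriticalPeaksJoinable R) {l₁ r₁ l₂ r₂ : Multiset A}
    (h₁ : (l₁, r₁) ∈ R) (h₂ : (l₂, r₂) ∈ R) {O : Multiset A} (hO₁ : O ≤ l₁) (hO₂ : O ≤ l₂) :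
    Join (ReflTransGen (MRStep R)) (r₁ + (l₂ - O)) ((l₁ - O) + r₂) := by
  rcases eq_or_ne O 0 with rfl | hO
  · simp only [tsub_zero]
    exact ⟨r₁ + r₂, .single ⟨(l₂, r₂), h₂, r₁, add_comm .., add_comm ..⟩,
      .single ⟨(l₁, r₁), h₁, r₂, rfl, rfl⟩⟩
  · exact hcp l₁ r₁ l₂ r₂ h₁ h₂ O hO hO₁ hO₂

theorem MRStep.join_of_critical_peaks (hcp : CriticalPeaksJoinable R) {M N₁ N₂ : Multiset A}
    (h₁ : MRStep R M N₁) (h₂ : MRStep R M N₂) : Join (ReflTransGen (MRStep R)) N₁ N₂ := by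
  obtain ⟨⟨l₁, r₁⟩, hr₁, K₁, rfl, rfl⟩ := h₁
  obtain ⟨⟨l₂, r₂⟩, hr₂, K₂, hM, rfl⟩ := h₂
  obtain ⟨C, rfl, rfl⟩ : ∃ C, K₁ = (l₂ - l₁ ∩ l₂) + C ∧ K₂ = (l₁ - l₁ ∩ l₂) + C :=
    ⟨K₁ ∩ K₂, by rw [inter_comm l₁, sub_inter, add_comm, inter_add_sub_of_add_eq_add hM],
      by rw [sub_inter, add_comm, inter_comm K₁, inter_add_sub_of_add_eq_add hM.symm]⟩
  obtain ⟨D, hD₁, hD₂⟩ := join_peak hcp hr₁ hr₂ (inter_le_left (s := l₁)) inter_le_right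
  refine ⟨D + C, ?_, ?_⟩
  · rw [← add_assoc]
    exact reflTransGen_add_right hD₁ C
  · rw [add_left_comm, ← add_assoc]
    exact reflTransGen_add_right hD₂ C

end MRStep

/-- Critical-pair criterion: if multiset rewriting is terminating and all
critical peaks are joinable, then it is confluent. -/
theorem multiset_critical_pair_confluence {A : Type*} [DecidableEq A]
    (R : Set (Multiset A × Multiset A))
    (hterm : ¬ ∃ f : ℕ → Multiset A, ∀ n, MRStep R (f n) (f (n + 1)))
    (hcp : ∀ l₁ r₁ l₂ r₂, (l₁, r₁) ∈ R → (l₂, r₂) ∈ R →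
      ∀ O : Multiset A, O ≠ 0 → O ≤ l₁ → O ≤ l₂ →
      ∃ D, Relation.ReflTransGen (MRStep R) (r₁ + (l₂ - O)) D ∧
        Relation.ReflTransGen (MRStep R) ((l₁ - O) + r₂) D) :
    ∀ M N₁ N₂, Relation.ReflTransGen (MRStep R) M N₁ →
      Relation.ReflTransGen (MRStep R) M N₂ →
      ∃ D, Relation.ReflTransGen (MRStep R) N₁ D ∧
        Relation.ReflTransGen (MRStep R) N₂ D := by
  have hwf : WellFounded (flip (MRStep R)) :=
    wellFounded_iff_isEmpty_descending_chain.mpr ⟨fun ⟨f, hf⟩ ↦ hterm ⟨f, hf⟩⟩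
  intro M N₁ N₂ h₁ h₂
  exact newman hwf (fun _ _ _ ↦ MRStep.join_of_critical_peaks hcp) h₁ h₂
end

section
/- The union of the 'duplicate' rule {p(t), p(t)} ⇒ {p(t)} and the rule {p(t)} ⇒ {p(t+1)} is a non-terminating but confluent multiset rewriting system: the relation admits an infinite reduction, yet any two coinitial reductions are joinable. -/
/-- One-step rewriting for the program with rules
`{p(t), p(t)} ⇒ {p(t)}` (duplicate removal) and `{p(t)} ⇒ {p(s(t))}`,
where the atom `p(sⁿ(0))` is encoded by the natural number `n` and states are
finite multisets of atoms. -/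
def PPlusStep : Multiset ℕ → Multiset ℕ → Prop :=
  fun M N => (∃ t K, M = t ::ₘ t ::ₘ K ∧ N = t ::ₘ K) ∨
    (∃ t K, M = t ::ₘ K ∧ N = (t + 1) ::ₘ K)

lemma pplus_cons {M N : Multiset ℕ} (a : ℕ) (h : PPlusStep M N) :
    PPlusStep (a ::ₘ M) (a ::ₘ N) := by
  rcases h with ⟨t, K, hM, hN⟩ | ⟨t, K, hM, hN⟩
  · exact Or.inl ⟨t, a ::ₘ K, by
      subst hM hN
      constructor
      · rw [Multiset.cons_swap a t, Multiset.cons_swap a t]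
      · rw [Multiset.cons_swap]⟩
  · exact Or.inr ⟨t, a ::ₘ K, by
      subst hM hN
      exact ⟨Multiset.cons_swap a t K, Multiset.cons_swap a (t+1) K⟩⟩

lemma pplus_rt_cons {M N : Multiset ℕ} (a : ℕ)
    (h : Relation.ReflTransGen PPlusStep M N) :
    Relation.ReflTransGen PPlusStep (a ::ₘ M) (a ::ₘ N) := by
  induction h with
  | refl => exact Relation.ReflTransGen.refl
  | tail _ hs ih => exact ih.tail (pplus_cons a hs)

lemma pplus_incr (a : ℕ) (K : Multiset ℕ) :
    PPlusStep (a ::ₘ K) ((a + 1) ::ₘ K) := Or.inr ⟨a, K, rfl, rfl⟩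

lemma pplus_incr_rt (a n : ℕ) (h : a ≤ n) (K : Multiset ℕ) :
    Relation.ReflTransGen PPlusStep (a ::ₘ K) (n ::ₘ K) := by
  induction n with
  | zero =>
    interval_cases a
    exact Relation.ReflTransGen.refl
  | succ m ih =>
    rcases Nat.lt_or_ge a (m + 1) with h' | h'
    · exact (ih (Nat.lt_succ_iff.mp h')).tail (pplus_incr m K)
    · have : a = m + 1 := le_antisymm h h'
      subst this; exact Relation.ReflTransGen.refl

lemma pplus_to_singleton (M : Multiset ℕ) (n : ℕ)
    (hne : M ≠ 0) (hb : ∀ x ∈ M, x ≤ n) :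
    Relation.ReflTransGen PPlusStep M {n} := by
  induction M using Multiset.induction with
  | empty => exact absurd rfl hne
  | cons a S ih =>
    by_cases hS : S = 0
    · subst hS
      exact pplus_incr_rt a n (hb a (Multiset.mem_cons_self a 0)) 0
    · have h1 : Relation.ReflTransGen PPlusStep (a ::ₘ S) (a ::ₘ ({n} : Multiset ℕ)) :=
        pplus_rt_cons a (ih hS (fun x hx => hb x (Multiset.mem_cons_of_mem hx)))
      have h2 : Relation.ReflTransGen PPlusStep (a ::ₘ ({n} : Multiset ℕ))
          (n ::ₘ ({n} : Multiset ℕ)) :=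
        pplus_incr_rt a n (hb a (Multiset.mem_cons_self a S)) {n}
      have h3 : PPlusStep (n ::ₘ ({n} : Multiset ℕ)) {n} :=
        Or.inl ⟨n, 0, rfl, rfl⟩
      exact (h1.trans h2).tail h3

lemma pplus_step_ne_zero {M N : Multiset ℕ} (h : PPlusStep M N) : N ≠ 0 := by
  rcases h with ⟨t, K, _, hN⟩ | ⟨t, K, _, hN⟩ <;> subst hN <;> exact Multiset.cons_ne_zero

lemma pplus_step_src_ne_zero {M N : Multiset ℕ} (h : PPlusStep M N) : M ≠ 0 := by
  rcases h with ⟨t, K, hM, _⟩ | ⟨t, K, hM, _⟩ <;> subst hM <;> exact Multiset.cons_ne_zero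

lemma pplus_rt_ne_zero {M N : Multiset ℕ} (h : Relation.ReflTransGen PPlusStep M N)
    (hM : M ≠ 0) : N ≠ 0 := by
  induction h with
  | refl => exact hM
  | tail _ hs _ => exact pplus_step_ne_zero hs

lemma mem_le_sum {M : Multiset ℕ} {x : ℕ} (hx : x ∈ M) : x ≤ M.sum := by
  induction M using Multiset.induction with
  | empty => simp at hx
  | cons a S ih =>
    rw [Multiset.sum_cons]
    rcases Multiset.mem_cons.mp hx with rfl | h
    · exact Nat.le_add_right _ _
    · exact (ih h).trans (Nat.le_add_left _ _)

/-- The program `P⁺` (duplicate removal plus `p(x) ⇔ p(s(x))`) is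
non-terminating but confluent. -/
theorem pplus_nonterminating_and_confluent :
    (∃ f : ℕ → Multiset ℕ, ∀ n, PPlusStep (f n) (f (n + 1))) ∧
    (∀ M N₁ N₂, Relation.ReflTransGen PPlusStep M N₁ →
      Relation.ReflTransGen PPlusStep M N₂ →
      ∃ D, Relation.ReflTransGen PPlusStep N₁ D ∧
        Relation.ReflTransGen PPlusStep N₂ D) := by
  constructor
  · exact ⟨fun n => {n}, fun n => Or.inr ⟨n, 0, rfl, rfl⟩⟩
  · intro M N₁ N₂ h1 h2
    by_cases hM : M = 0
    · subst hM
      have e1 : N₁ = 0 := by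
        rcases h1.cases_head with rfl | ⟨c, hc, _⟩
        · rfl
        · exact absurd rfl (pplus_step_src_ne_zero hc)
      have e2 : N₂ = 0 := by
        rcases h2.cases_head with rfl | ⟨c, hc, _⟩
        · rfl
        · exact absurd rfl (pplus_step_src_ne_zero hc)
      exact ⟨0, by rw [e1], by rw [e2]⟩
    · set n := N₁.sum + N₂.sum with hn
      refine ⟨{n}, ?_, ?_⟩
      · exact pplus_to_singleton N₁ n (pplus_rt_ne_zero h1 hM)
          (fun x hx => (mem_le_sum hx).trans (Nat.le_add_right _ _))
      · exact pplus_to_singleton N₂ n (pplus_rt_ne_zero h2 hM)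
          (fun x hx => (mem_le_sum hx).trans (Nat.le_add_left _ _))
end
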